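/- arXiv:math/0608307 — 3 statements merged into one kernel-verified Lean document; each statement's English description precedes it below -/
import Mathlib

section
/- The Ewens sampling formula defines a probability distribution: for each n ≥ 1 and θ > 0, the sum over all set partitions π of {1,...,n} of θ^{k(π)−1}/[θ+1]_{n−1} · ∏_{B ∈ π} (|B|−1)! equals 1, where k(π) is the number of blocks of π and [x]_m = x(x+1)···(x+m−1). -/
open scoped Classical

/-- `P` is a set partition of `[n] = Fin n`, encoded as a finite set of nonempty,
pairwise disjoint blocks whose union is all of `Fin n`. -/
def IsSetPartition (n : ℕ) (P : Finset (Finset (Fin n))) : Prop :=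
  (∀ B ∈ P, B.Nonempty) ∧
    ((P : Set (Finset (Fin n))).PairwiseDisjoint id) ∧
    P.sup id = Finset.univ

namespace Ewens

open Finset

variable {n : ℕ}

def up (B : Finset (Fin n)) : Finset (Fin (n+1)) :=
  B.map ⟨Fin.castSucc, Fin.castSucc_injective n⟩

def down (B : Finset (Fin (n+1))) : Finset (Fin n) :=
  univ.filter (fun i => i.castSucc ∈ B)

@[simp] lemma mem_down {B : Finset (Fin (n+1))} {i : Fin n} :
    i ∈ down B ↔ i.castSucc ∈ B := by simp [down]

@[simp] lemma mem_up {B : Finset (Fin n)} {x : Fin (n+1)} :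
    x ∈ up B ↔ ∃ i ∈ B, i.castSucc = x := by simp [up]

@[simp] lemma castSucc_mem_up {B : Finset (Fin n)} {i : Fin n} :
    i.castSucc ∈ up B ↔ i ∈ B := by
  rw [mem_up]
  constructor
  · rintro ⟨j, hj, h⟩; rwa [(Fin.castSucc_injective n) h] at hj
  · exact fun h => ⟨i, h, rfl⟩

@[simp] lemma last_not_mem_up (B : Finset (Fin n)) : Fin.last n ∉ up B := by
  simp only [mem_up]
  rintro ⟨i, _, h⟩
  exact absurd h (Fin.castSucc_lt_last i).ne

@[simp] lemma down_up (B : Finset (Fin n)) : down (up B) = B := by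
  ext i; simp

lemma up_down {B : Finset (Fin (n+1))} (h : Fin.last n ∉ B) : up (down B) = B := by
  ext x
  induction x using Fin.lastCases with
  | last =>
    simp only [mem_up]
    constructor
    · rintro ⟨i, _, hi⟩; exact absurd hi (Fin.castSucc_lt_last i).ne
    · intro hx; exact absurd hx h
  | cast i => simp

lemma up_down_erase (B : Finset (Fin (n+1))) : up (down B) = B.erase (Fin.last n) := by
  ext x
  induction x using Fin.lastCases with
  | last =>
    simp only [mem_up, Finset.mem_erase]
    constructor
    · rintro ⟨i, _, hi⟩; exact absurd hi (Fin.castSucc_lt_last i).ne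
    · rintro ⟨h, _⟩; exact absurd rfl h
  | cast i =>
    simp [Finset.mem_erase, (Fin.castSucc_lt_last i).ne]

@[simp] lemma card_up (B : Finset (Fin n)) : (up B).card = B.card := Finset.card_map _

lemma up_injective : Function.Injective (up (n := n)) := by
  intro a b h
  have := congrArg down h
  simpa using this

@[simp] lemma up_nonempty {B : Finset (Fin n)} : (up B).Nonempty ↔ B.Nonempty := by
  rw [← Finset.card_pos, ← Finset.card_pos, card_up]

@[simp] lemma up_eq_empty {B : Finset (Fin n)} : up B = ∅ ↔ B = ∅ := by
  simp [← Finset.card_eq_zero]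

def blockOf (Q : Finset (Finset (Fin (n+1)))) (x : Fin (n+1)) : Finset (Fin (n+1)) :=
  Q.sup (fun B => if x ∈ B then B else ∅)

lemma blockOf_eq {Q : Finset (Finset (Fin (n+1)))} {x : Fin (n+1)} {B : Finset (Fin (n+1))}
    (hd : (Q : Set (Finset (Fin (n+1)))).PairwiseDisjoint id)
    (hB : B ∈ Q) (hx : x ∈ B) : blockOf Q x = B := by
  apply le_antisymm
  · apply Finset.sup_le
    intro C hC
    by_cases hxC : x ∈ C
    · have hCB : C = B := by
        by_contra hne
        have h2 := hd hC hB hne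
        exact absurd hx (Finset.disjoint_left.mp h2 hxC)
      subst hCB
      simp [hxC]
    · simp [hxC]
  · have h1 := Finset.le_sup (f := fun C => if x ∈ C then C else ∅) hB
    simp only [hx, if_pos] at h1
    exact h1


lemma blockOf_mem {Q : Finset (Finset (Fin (n+1)))} (h : IsSetPartition (n+1) Q)
    (x : Fin (n+1)) : blockOf Q x ∈ Q ∧ x ∈ blockOf Q x := by
  obtain ⟨hne, hd, hsup⟩ := h
  have hx : x ∈ Q.sup id := by rw [hsup]; exact Finset.mem_univ x
  rw [Finset.mem_sup] at hx
  obtain ⟨B, hB, hxB⟩ := hx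
  rw [blockOf_eq hd hB hxB]
  exact ⟨hB, hxB⟩

def fwdP (Q : Finset (Finset (Fin (n+1)))) : Finset (Finset (Fin n)) :=
  (Q.image down).filter (·.Nonempty)

noncomputable def fwdC (Q : Finset (Finset (Fin (n+1)))) : Option (Finset (Fin n)) :=
  if blockOf Q (Fin.last n) = {Fin.last n} then none
  else some (down (blockOf Q (Fin.last n)))

def bwd (P : Finset (Finset (Fin n))) : Option (Finset (Fin n)) → Finset (Finset (Fin (n+1)))
  | none => insert {Fin.last n} (P.image up)
  | some B => insert (insert (Fin.last n) (up B)) ((P.erase B).image up)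

lemma mem_fwdP {Q : Finset (Finset (Fin (n+1)))} {A : Finset (Fin n)} :
    A ∈ fwdP Q ↔ A.Nonempty ∧ ∃ B ∈ Q, down B = A := by
  simp [fwdP, and_comm]

lemma fwdP_isPartition {Q : Finset (Finset (Fin (n+1)))} (h : IsSetPartition (n+1) Q) :
    IsSetPartition n (fwdP Q) := by
  obtain ⟨hne, hd, hsup⟩ := h
  refine ⟨?_, ?_, ?_⟩
  · intro A hA; exact (mem_fwdP.mp hA).1
  · intro A1 h1 A2 h2 hne12
    obtain ⟨_, B1, hB1, rfl⟩ := mem_fwdP.mp h1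
    obtain ⟨_, B2, hB2, rfl⟩ := mem_fwdP.mp h2
    have hB : B1 ≠ B2 := by rintro rfl; exact hne12 rfl
    have := hd hB1 hB2 hB
    simp only [Function.onFun, id] at this ⊢
    rw [Finset.disjoint_left] at this ⊢
    intro i hi1 hi2
    exact this (mem_down.mp hi1) (mem_down.mp hi2)
  · apply Finset.eq_univ_of_forall
    intro i
    rw [Finset.mem_sup]
    have hx : i.castSucc ∈ Q.sup id := by rw [hsup]; exact Finset.mem_univ _
    rw [Finset.mem_sup] at hx
    obtain ⟨B, hB, hxB⟩ := hx
    refine ⟨down B, mem_fwdP.mpr ⟨⟨i, mem_down.mpr hxB⟩, B, hB, rfl⟩, mem_down.mpr hxB⟩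

lemma bwd_isPartition_none {P : Finset (Finset (Fin n))} (h : IsSetPartition n P) :
    IsSetPartition (n+1) (bwd P none) := by
  obtain ⟨hne, hd, hsup⟩ := h
  refine ⟨?_, ?_, ?_⟩
  · intro B hB
    simp only [bwd, Finset.mem_insert, Finset.mem_image] at hB
    rcases hB with rfl | ⟨A, hA, rfl⟩
    · exact ⟨_, Finset.mem_singleton_self _⟩
    · exact up_nonempty.mpr (hne A hA)
  · intro B1 h1 B2 h2 hne12
    simp only [bwd, Finset.coe_insert, Set.mem_insert_iff, Finset.coe_image,
      Set.mem_image, Finset.mem_coe] at h1 h2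
    simp only [Function.onFun, id]
    rw [Finset.disjoint_left]
    rintro x hx1 hx2
    rcases h1 with rfl | ⟨A1, hA1, rfl⟩ <;> rcases h2 with rfl | ⟨A2, hA2, rfl⟩
    · exact hne12 rfl
    · rw [Finset.mem_singleton] at hx1; subst hx1; exact last_not_mem_up _ hx2
    · rw [Finset.mem_singleton] at hx2; subst hx2; exact last_not_mem_up _ hx1
    · have hA : A1 ≠ A2 := fun hh => hne12 (by rw [hh])
      have := hd hA1 hA2 hA
      simp only [Function.onFun, id] at this
      rw [Finset.disjoint_left] at this
      obtain ⟨i, hi, rfl⟩ := mem_up.mp hx1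
      exact this hi (castSucc_mem_up.mp hx2)
  · apply Finset.eq_univ_of_forall
    intro x
    rw [Finset.mem_sup]
    induction x using Fin.lastCases with
    | last => exact ⟨{Fin.last n}, by simp [bwd], Finset.mem_singleton_self _⟩
    | cast i =>
      have hx : i ∈ P.sup id := by rw [hsup]; exact Finset.mem_univ _
      rw [Finset.mem_sup] at hx
      obtain ⟨A, hA, hiA⟩ := hx
      exact ⟨up A, by simp [bwd, Finset.mem_image]; right; exact ⟨A, hA, rfl⟩,
        castSucc_mem_up.mpr hiA⟩

lemma bwd_isPartition_some {P : Finset (Finset (Fin n))} (h : IsSetPartition n P)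
    {B : Finset (Fin n)} (hB : B ∈ P) :
    IsSetPartition (n+1) (bwd P (some B)) := by
  obtain ⟨hne, hd, hsup⟩ := h
  refine ⟨?_, ?_, ?_⟩
  · intro C hC
    simp only [bwd, Finset.mem_insert, Finset.mem_image] at hC
    rcases hC with rfl | ⟨A, hA, rfl⟩
    · exact ⟨_, Finset.mem_insert_self _ _⟩
    · exact up_nonempty.mpr (hne A (Finset.mem_of_mem_erase hA))
  · intro B1 h1 B2 h2 hne12
    simp only [bwd, Finset.coe_insert, Set.mem_insert_iff, Finset.coe_image,
      Set.mem_image, Finset.mem_coe] at h1 h2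
    simp only [Function.onFun, id]
    rw [Finset.disjoint_left]
    rintro x hx1 hx2
    rcases h1 with rfl | ⟨A1, hA1, rfl⟩ <;> rcases h2 with rfl | ⟨A2, hA2, rfl⟩
    · exact hne12 rfl
    · -- x ∈ insert last (up B), x ∈ up A2, A2 ∈ P.erase B
      rw [Finset.mem_insert] at hx1
      rcases hx1 with rfl | hx1
      · exact last_not_mem_up _ hx2
      · obtain ⟨i, hi, rfl⟩ := mem_up.mp hx1
        have hA : B ≠ A2 := fun hh => (Finset.ne_of_mem_erase hA2) hh.symm
        have := hd hB (Finset.mem_of_mem_erase hA2) hA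
        simp only [Function.onFun, id] at this
        exact Finset.disjoint_left.mp this hi (castSucc_mem_up.mp hx2)
    · rw [Finset.mem_insert] at hx2
      rcases hx2 with rfl | hx2
      · exact last_not_mem_up _ hx1
      · obtain ⟨i, hi, rfl⟩ := mem_up.mp hx2
        have hA : B ≠ A1 := fun hh => (Finset.ne_of_mem_erase hA1) hh.symm
        have := hd hB (Finset.mem_of_mem_erase hA1) hA
        simp only [Function.onFun, id] at this
        exact Finset.disjoint_left.mp this hi (castSucc_mem_up.mp hx1)
    · have hA : A1 ≠ A2 := fun hh => hne12 (by rw [hh])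
      have := hd (Finset.mem_of_mem_erase hA1) (Finset.mem_of_mem_erase hA2) hA
      simp only [Function.onFun, id] at this
      obtain ⟨i, hi, rfl⟩ := mem_up.mp hx1
      exact Finset.disjoint_left.mp this hi (castSucc_mem_up.mp hx2)
  · apply Finset.eq_univ_of_forall
    intro x
    rw [Finset.mem_sup]
    induction x using Fin.lastCases with
    | last =>
      exact ⟨insert (Fin.last n) (up B), Finset.mem_insert_self _ _,
        Finset.mem_insert_self _ _⟩
    | cast i =>
      have hx : i ∈ P.sup id := by rw [hsup]; exact Finset.mem_univ _
      rw [Finset.mem_sup] at hx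
      obtain ⟨A, hA, hiA⟩ := hx
      by_cases hAB : A = B
      · subst hAB
        exact ⟨insert (Fin.last n) (up A), Finset.mem_insert_self _ _,
          Finset.mem_insert_of_mem (castSucc_mem_up.mpr hiA)⟩
      · refine ⟨up A, ?_, castSucc_mem_up.mpr hiA⟩
        simp only [bwd, Finset.mem_insert, Finset.mem_image]
        right
        exact ⟨A, Finset.mem_erase.mpr ⟨hAB, hA⟩, rfl⟩

lemma singleton_last_notMem_image_up (P : Finset (Finset (Fin n))) :
    {Fin.last n} ∉ P.image up := by
  simp only [Finset.mem_image]
  rintro ⟨A, hA, hup⟩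
  have : Fin.last n ∈ up A := by rw [hup]; exact Finset.mem_singleton_self _
  exact last_not_mem_up A this

lemma insert_last_notMem_image_up (B : Finset (Fin n)) (S : Finset (Finset (Fin n))) :
    insert (Fin.last n) (up B) ∉ S.image up := by
  simp only [Finset.mem_image]
  rintro ⟨A, hA, hup⟩
  have : Fin.last n ∈ up A := by rw [hup]; exact Finset.mem_insert_self _ _
  exact last_not_mem_up A this

lemma card_bwd_none (P : Finset (Finset (Fin n))) :
    (bwd P none).card = P.card + 1 := by
  rw [bwd, Finset.card_insert_of_notMem (singleton_last_notMem_image_up P),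
    Finset.card_image_of_injective _ up_injective]

lemma card_bwd_some (P : Finset (Finset (Fin n))) {B : Finset (Fin n)} (hB : B ∈ P) :
    (bwd P (some B)).card = P.card := by
  rw [bwd, Finset.card_insert_of_notMem (insert_last_notMem_image_up B _),
    Finset.card_image_of_injective _ up_injective, Finset.card_erase_of_mem hB]
  have : 0 < P.card := Finset.card_pos.mpr ⟨B, hB⟩
  omega

lemma prod_bwd_none (P : Finset (Finset (Fin n))) :
    ∏ C ∈ bwd P none, (Nat.factorial (C.card - 1) : ℝ)
      = ∏ A ∈ P, (Nat.factorial (A.card - 1) : ℝ) := by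
  rw [bwd, Finset.prod_insert (singleton_last_notMem_image_up P),
    Finset.prod_image (fun a _ b _ h => up_injective h)]
  simp

lemma prod_bwd_some (P : Finset (Finset (Fin n))) {B : Finset (Fin n)} (hB : B ∈ P)
    (hBne : B.Nonempty) :
    ∏ C ∈ bwd P (some B), (Nat.factorial (C.card - 1) : ℝ)
      = B.card * ∏ A ∈ P, (Nat.factorial (A.card - 1) : ℝ) := by
  rw [bwd, Finset.prod_insert (insert_last_notMem_image_up B _),
    Finset.prod_image (fun a _ b _ h => up_injective h)]
  have h1 : (insert (Fin.last n) (up B)).card = B.card + 1 := by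
    rw [Finset.card_insert_of_notMem (last_not_mem_up B), card_up]
  rw [h1]
  have hBc : 1 ≤ B.card := Finset.card_pos.mpr hBne
  have h2 : Nat.factorial (B.card + 1 - 1) = B.card * Nat.factorial (B.card - 1) := by
    obtain ⟨m, hm⟩ := Nat.exists_eq_add_of_le hBc
    rw [hm]
    simp [Nat.factorial_succ, Nat.add_comm]
  rw [← Finset.prod_erase_mul P _ hB, h2]
  simp only [card_up]
  push_cast
  ring

lemma down_singleton_last : down ({Fin.last n} : Finset (Fin (n+1))) = ∅ := by
  ext i; simp [(Fin.castSucc_lt_last i).ne]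

lemma down_insert_last (C : Finset (Fin (n+1))) :
    down (insert (Fin.last n) C) = down C := by
  ext i; simp [(Fin.castSucc_lt_last i).ne]

lemma fwdP_bwd_none {P : Finset (Finset (Fin n))} (h : IsSetPartition n P) :
    fwdP (bwd P none) = P := by
  ext A
  rw [mem_fwdP]
  simp only [bwd, Finset.mem_insert, Finset.mem_image]
  constructor
  · rintro ⟨hAne, B, (rfl | ⟨A', hA', rfl⟩), rfl⟩
    · rw [down_singleton_last] at hAne; exact absurd rfl hAne.ne_empty
    · rwa [down_up]
  · intro hA
    exact ⟨h.1 A hA, up A, Or.inr ⟨A, hA, rfl⟩, down_up A⟩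

lemma fwdC_bwd_none {P : Finset (Finset (Fin n))} (h : IsSetPartition n P) :
    fwdC (bwd P none) = none := by
  have hpart := bwd_isPartition_none h
  have hb : blockOf (bwd P none) (Fin.last n) = {Fin.last n} :=
    blockOf_eq hpart.2.1 (Finset.mem_insert_self _ _) (Finset.mem_singleton_self _)
  rw [fwdC, if_pos hb]

lemma fwdP_bwd_some {P : Finset (Finset (Fin n))} (h : IsSetPartition n P)
    {B : Finset (Fin n)} (hB : B ∈ P) :
    fwdP (bwd P (some B)) = P := by
  ext A
  rw [mem_fwdP]
  simp only [bwd, Finset.mem_insert, Finset.mem_image]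
  constructor
  · rintro ⟨hAne, C, (rfl | ⟨A', hA', rfl⟩), rfl⟩
    · rwa [down_insert_last, down_up]
    · rw [down_up]; exact Finset.mem_of_mem_erase hA'
  · intro hA
    by_cases hAB : A = B
    · subst hAB
      exact ⟨h.1 A hA, _, Or.inl rfl, by rw [down_insert_last, down_up]⟩
    · exact ⟨h.1 A hA, up A, Or.inr ⟨A, Finset.mem_erase.mpr ⟨hAB, hA⟩, rfl⟩, down_up A⟩

lemma fwdC_bwd_some {P : Finset (Finset (Fin n))} (h : IsSetPartition n P)
    {B : Finset (Fin n)} (hB : B ∈ P) :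
    fwdC (bwd P (some B)) = some B := by
  have hpart := bwd_isPartition_some h hB
  have hb : blockOf (bwd P (some B)) (Fin.last n) = insert (Fin.last n) (up B) :=
    blockOf_eq hpart.2.1 (Finset.mem_insert_self _ _) (Finset.mem_insert_self _ _)
  have hne : insert (Fin.last n) (up B) ≠ {Fin.last n} := by
    intro hcontra
    obtain ⟨i, hi⟩ := h.1 B hB
    have : i.castSucc ∈ insert (Fin.last n) (up B) :=
      Finset.mem_insert_of_mem (castSucc_mem_up.mpr hi)
    rw [hcontra, Finset.mem_singleton] at this
    exact (Fin.castSucc_lt_last i).ne this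
  rw [fwdC, hb, if_neg hne, down_insert_last, down_up]

lemma eq_blockOf_of_last_mem {Q : Finset (Finset (Fin (n+1)))} (h : IsSetPartition (n+1) Q)
    {X : Finset (Fin (n+1))} (hX : X ∈ Q) (hL : Fin.last n ∈ X) :
    X = blockOf Q (Fin.last n) := (blockOf_eq h.2.1 hX hL).symm

lemma last_notMem_of_ne_blockOf {Q : Finset (Finset (Fin (n+1)))}
    (h : IsSetPartition (n+1) Q) {X : Finset (Fin (n+1))} (hX : X ∈ Q)
    (hne : X ≠ blockOf Q (Fin.last n)) : Fin.last n ∉ X :=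
  fun hL => hne (eq_blockOf_of_last_mem h hX hL)

lemma fwdC_mem {Q : Finset (Finset (Fin (n+1)))} (h : IsSetPartition (n+1) Q) :
    fwdC Q ∈ insert none ((fwdP Q).image some) := by
  rw [fwdC]
  split_ifs with hc
  · exact Finset.mem_insert_self _ _
  · apply Finset.mem_insert_of_mem
    rw [Finset.mem_image]
    refine ⟨down (blockOf Q (Fin.last n)), ?_, rfl⟩
    obtain ⟨hmem, hLmem⟩ := blockOf_mem h (Fin.last n)
    rw [mem_fwdP]
    refine ⟨?_, _, hmem, rfl⟩
    -- blockOf Q last ≠ {last}, last ∈ blockOf, so it has another element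
    by_contra hemp
    rw [Finset.not_nonempty_iff_eq_empty] at hemp
    apply hc
    apply Finset.Subset.antisymm
    · intro x hx
      rw [Finset.mem_singleton]
      induction x using Fin.lastCases with
      | last => rfl
      | cast i =>
        exfalso
        have : i ∈ down (blockOf Q (Fin.last n)) := mem_down.mpr hx
        rw [hemp] at this
        exact absurd this (Finset.notMem_empty i)
    · intro x hx
      rw [Finset.mem_singleton] at hx
      subst hx
      exact hLmem

lemma bwd_fwd {Q : Finset (Finset (Fin (n+1)))} (h : IsSetPartition (n+1) Q) :
    bwd (fwdP Q) (fwdC Q) = Q := by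
  set C := blockOf Q (Fin.last n) with hCdef
  obtain ⟨hCmem, hLC⟩ := blockOf_mem h (Fin.last n)
  rw [fwdC]
  split_ifs with hc
  · -- C = {last}
    show insert {Fin.last n} ((fwdP Q).image up) = Q
    ext X
    simp only [Finset.mem_insert, Finset.mem_image]
    constructor
    · rintro (rfl | ⟨A, hA, rfl⟩)
      · rw [← hc]; exact hCmem
      · obtain ⟨hAne, B, hB, rfl⟩ := mem_fwdP.mp hA
        have hBC : B ≠ C := by
          rintro rfl
          rw [← hCdef] at hc
          rw [hc, down_singleton_last] at hAne
          exact hAne.ne_empty rfl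
        rw [up_down (last_notMem_of_ne_blockOf h hB hBC)]
        exact hB
    · intro hX
      by_cases hXC : X = C
      · subst hXC; left; rw [← hCdef] at hc; exact hc
      · right
        have hL : Fin.last n ∉ X := last_notMem_of_ne_blockOf h hX hXC
        refine ⟨down X, mem_fwdP.mpr ⟨?_, X, hX, rfl⟩, up_down hL⟩
        obtain ⟨x, hx⟩ := h.1 X hX
        induction x using Fin.lastCases with
        | last => exact absurd hx hL
        | cast i => exact ⟨i, mem_down.mpr hx⟩
  · -- C ≠ {last}
    show insert (insert (Fin.last n) (up (down C))) (((fwdP Q).erase (down C)).image up) = Q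
    have hclast : insert (Fin.last n) (up (down C)) = C := by
      rw [up_down_erase, Finset.insert_erase hLC]
    rw [hclast]
    ext X
    simp only [Finset.mem_insert, Finset.mem_image]
    constructor
    · rintro (rfl | ⟨A, hA, rfl⟩)
      · exact hCmem
      · obtain ⟨hAne, hA⟩ := Finset.mem_erase.mp hA
        obtain ⟨hAne', B, hB, rfl⟩ := mem_fwdP.mp hA
        have hBC : B ≠ C := fun hh => hAne (by rw [hh])
        rw [up_down (last_notMem_of_ne_blockOf h hB hBC)]
        exact hB
    · intro hX
      by_cases hXC : X = C
      · subst hXC; left; rfl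
      · right
        have hL : Fin.last n ∉ X := last_notMem_of_ne_blockOf h hX hXC
        have hXne := h.1 X hX
        have hdne : down X ≠ down C := by
          intro heq
          have h1 : X = C.erase (Fin.last n) := by
            rw [← up_down hL, heq, up_down_erase]
          obtain ⟨x, hx⟩ := hXne
          have hxC : x ∈ C := Finset.mem_of_mem_erase (h1 ▸ hx)
          have hdisj := h.2.1 hX hCmem hXC
          simp only [Function.onFun, id] at hdisj
          exact Finset.disjoint_left.mp hdisj hx hxC
        refine ⟨down X, Finset.mem_erase.mpr ⟨hdne, mem_fwdP.mpr ⟨?_, X, hX, rfl⟩⟩, up_down hL⟩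
        obtain ⟨x, hx⟩ := hXne
        induction x using Fin.lastCases with
        | last => exact absurd hx hL
        | cast i => exact ⟨i, mem_down.mpr hx⟩

lemma sum_card_eq {m : ℕ} {P : Finset (Finset (Fin m))} (h : IsSetPartition m P) :
    ∑ B ∈ P, B.card = m := by
  have h1 : (Finset.univ : Finset (Fin m)) = P.biUnion id := by
    rw [← h.2.2, Finset.sup_eq_biUnion]
  have h2 := Finset.card_biUnion (s := P) (t := id)
    (fun x hx y hy hxy => h.2.1 hx hy hxy)
  rw [← h1, Finset.card_univ, Fintype.card_fin] at h2
  simpa using h2.symm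

lemma none_notMem_image_some (P : Finset (Finset (Fin n))) :
    none ∉ P.image (some : Finset (Fin n) → Option (Finset (Fin n))) := by
  simp

lemma key (n : ℕ) (θ : ℝ) :
    ∑ P ∈ Finset.univ.filter (IsSetPartition n),
        θ ^ P.card * ∏ B ∈ P, (Nat.factorial (B.card - 1) : ℝ)
      = ∏ i ∈ Finset.range n, (θ + i) := by
  induction n with
  | zero =>
    have hfilt : (Finset.univ.filter (IsSetPartition 0)) = {(∅ : Finset (Finset (Fin 0)))} := by
      ext P
      simp only [Finset.mem_filter, Finset.mem_univ, true_and, Finset.mem_singleton]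
      constructor
      · rintro ⟨hne, _, _⟩
        rw [Finset.eq_empty_iff_forall_notMem]
        intro B hB
        obtain ⟨x, _⟩ := hne B hB
        exact x.elim0
      · rintro rfl
        refine ⟨by simp, by simp, ?_⟩
        apply Finset.eq_empty_of_forall_notMem
        intro x _
        exact x.elim0
    rw [hfilt]
    simp
  | succ n ih =>
    have step : ∑ P ∈ Finset.univ.filter (IsSetPartition (n+1)),
        θ ^ P.card * ∏ B ∈ P, (Nat.factorial (B.card - 1) : ℝ)
      = ∑ pc ∈ (Finset.univ.filter (IsSetPartition n)).sigma
            (fun P => insert none (P.image some)),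
          θ ^ (bwd pc.1 pc.2).card * ∏ B ∈ bwd pc.1 pc.2, (Nat.factorial (B.card - 1) : ℝ) := by
      apply Finset.sum_nbij' (i := fun Q => ⟨fwdP Q, fwdC Q⟩) (j := fun pc => bwd pc.1 pc.2)
      · intro Q hQ
        have h := (Finset.mem_filter.mp hQ).2
        rw [Finset.mem_sigma]
        exact ⟨Finset.mem_filter.mpr ⟨Finset.mem_univ _, fwdP_isPartition h⟩, fwdC_mem h⟩
      · rintro ⟨P, c⟩ hpc
        rw [Finset.mem_sigma] at hpc
        have hP := (Finset.mem_filter.mp hpc.1).2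
        rw [Finset.mem_filter]
        refine ⟨Finset.mem_univ _, ?_⟩
        rcases Finset.mem_insert.mp hpc.2 with hc | hc
        · rw [hc]; exact bwd_isPartition_none hP
        · obtain ⟨B, hB, hBc⟩ := Finset.mem_image.mp hc
          rw [← hBc]
          exact bwd_isPartition_some hP hB
      · intro Q hQ
        exact bwd_fwd (Finset.mem_filter.mp hQ).2
      · rintro ⟨P, c⟩ hpc
        rw [Finset.mem_sigma] at hpc
        have hP := (Finset.mem_filter.mp hpc.1).2
        rcases Finset.mem_insert.mp hpc.2 with hc | hc
        · subst hc
          have h1 := fwdP_bwd_none hP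
          have h2 := fwdC_bwd_none hP
          simp only [h1, h2]
        · obtain ⟨B, hB, hBc⟩ := Finset.mem_image.mp hc
          subst hBc
          have h1 := fwdP_bwd_some hP hB
          have h2 := fwdC_bwd_some hP hB
          simp only [h1, h2]
      · intro Q hQ
        rw [bwd_fwd (Finset.mem_filter.mp hQ).2]
    rw [step, Finset.sum_sigma]
    have inner : ∀ P ∈ Finset.univ.filter (IsSetPartition n),
        ∑ c ∈ insert none (P.image some),
            θ ^ (bwd P c).card * ∏ B ∈ bwd P c, (Nat.factorial (B.card - 1) : ℝ)
          = (θ + n) * (θ ^ P.card * ∏ B ∈ P, (Nat.factorial (B.card - 1) : ℝ)) := by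
      intro P hP
      have h := (Finset.mem_filter.mp hP).2
      rw [Finset.sum_insert (none_notMem_image_some P),
        Finset.sum_image (fun a _ b _ hab => Option.some_injective _ hab)]
      rw [card_bwd_none, prod_bwd_none]
      have hsome : ∀ B ∈ P,
          θ ^ (bwd P (some B)).card * ∏ C ∈ bwd P (some B), (Nat.factorial (C.card - 1) : ℝ)
            = (B.card : ℝ) * (θ ^ P.card * ∏ A ∈ P, (Nat.factorial (A.card - 1) : ℝ)) := by
        intro B hB
        rw [card_bwd_some P hB, prod_bwd_some P hB (h.1 B hB)]
        ring
      rw [Finset.sum_congr rfl hsome, ← Finset.sum_mul, ← Nat.cast_sum, sum_card_eq h]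
      ring
    rw [Finset.sum_congr rfl inner, ← Finset.mul_sum, ih, Finset.prod_range_succ]
    ring

end Ewens

/-- the Ewens sampling formula defines a probability distribution on set
partitions of `[n]`: the weights `θ^{k−1}/[θ+1]_{n−1} · ∏_{B}(|B|−1)!` sum to `1`. -/
theorem ewens_sampling_formula_sums_to_one (n : ℕ) (hn : 1 ≤ n) (θ : ℝ) (hθ : 0 < θ) :
    ∑ P ∈ Finset.univ.filter (IsSetPartition n),
        θ ^ (P.card - 1) / (∏ i ∈ Finset.range (n - 1), (θ + 1 + i)) *
          ∏ B ∈ P, (Nat.factorial (B.card - 1) : ℝ) = 1 := by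
  obtain ⟨m, rfl⟩ : ∃ m, n = m + 1 := ⟨n - 1, by omega⟩
  have hm : m + 1 - 1 = m := rfl
  rw [hm]
  set D := ∏ i ∈ Finset.range m, (θ + 1 + i) with hDdef
  have hD : 0 < D := Finset.prod_pos fun i _ => by positivity
  have hprod : ∏ i ∈ Finset.range (m+1), (θ + i) = θ * D := by
    rw [Finset.prod_range_succ']
    simp only [Nat.cast_zero, add_zero, Nat.cast_add, Nat.cast_one]
    rw [mul_comm]
    congr 1
    apply Finset.prod_congr rfl
    intro i _
    ring
  have hkey := Ewens.key (m+1) θ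
  rw [hprod] at hkey
  have hterm : ∀ P ∈ Finset.univ.filter (IsSetPartition (m+1)),
      θ ^ (P.card - 1) / D * ∏ B ∈ P, (Nat.factorial (B.card - 1) : ℝ)
        = (θ ^ P.card * ∏ B ∈ P, (Nat.factorial (B.card - 1) : ℝ)) / (θ * D) := by
    intro P hP
    have h := (Finset.mem_filter.mp hP).2
    have hPne : P.Nonempty := by
      rw [Finset.nonempty_iff_ne_empty]
      rintro rfl
      have := h.2.2
      simp only [Finset.sup_empty] at this
      have h0 : (0 : Fin (m+1)) ∈ (⊥ : Finset (Fin (m+1))) := by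
        rw [this]; exact Finset.mem_univ _
      exact absurd h0 (Finset.notMem_empty _)
    obtain ⟨k, hk⟩ : ∃ k, P.card = k + 1 := ⟨P.card - 1, by
      have := Finset.card_pos.mpr hPne; omega⟩
    rw [hk]
    simp only [Nat.add_sub_cancel, pow_succ]
    field_simp
  rw [Finset.sum_congr rfl hterm, ← Finset.sum_div, hkey]
  field_simp
end

section
/- The ordered Ewens sampling formula defines a probability distribution: for each n ≥ 1 and θ > 0, the sum over all ordered set partitions π* = (B_1, ..., B_k) of [n] of θ^{k−1}/[θ+1]_{n−1} · ∏_{j=1}^k n_j!/(n_1+···+n_j), where n_j = |B_j|, equals 1. -/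
/-!
Let `Z_θ(U) = ∑_k θ^k ∑_{(B_1, …, B_k)} ∏_j n_j! / (n_1 + ⋯ + n_j)`, the inner sum running over
the ordered partitions of a finite set `U` into `k` blocks. The last block `T` of such a partition
has prefix sum `n_1 + ⋯ + n_k = |U|`, and removing it leaves an ordered partition of `U \ T`; hence
`Z_θ(U) = θ ∑_{∅ ≠ T ⊆ U} |T|! / |U| · Z_θ(U \ T)` and `Z_θ(∅) = 1`. The rising factorial
`[θ]_{|U|}` satisfies the same recursion, since grouping the subsets `T` by size turns it into
`[θ]_{m+1} = θ ∑_r m(m-1)⋯(m-r+1) [θ]_{m-r}`. So `Z_θ([n]) = [θ]_n = θ [θ+1]_{n-1}`, which is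
the normalisation of the ordered Ewens sampling formula.
-/

open Finset Polynomial
open scoped Nat Classical

theorem ascPochhammer_eval_eq_prod_range {R : Type*} [CommSemiring R] (n : ℕ) (x : R) :
    (ascPochhammer R n).eval x = ∏ i ∈ range n, (x + i) := by
  induction n with
  | zero => simp
  | succ n ih => rw [ascPochhammer_succ_eval, ih, prod_range_succ]

theorem ascPochhammer_succ_eval_eq_mul_sum_descFactorial {R : Type*} [CommSemiring R] (x : R)
    (m : ℕ) : (ascPochhammer R (m + 1)).eval x =
      x * ∑ r ∈ range (m + 1), (m.descFactorial r : R) * (ascPochhammer R (m - r)).eval x := by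
  induction m with
  | zero => simp
  | succ m ih =>
    have hsplit : ∑ r ∈ range (m + 2), ((m + 1).descFactorial r : R) *
          (ascPochhammer R (m + 1 - r)).eval x =
        (ascPochhammer R (m + 1)).eval x + (m + 1) * ∑ r ∈ range (m + 1),
          (m.descFactorial r : R) * (ascPochhammer R (m - r)).eval x := by
      rw [sum_range_succ', mul_sum]
      simp only [Nat.succ_descFactorial_succ, Nat.add_sub_add_right, Nat.descFactorial_zero]
      push_cast
      simp only [mul_assoc, one_mul]
      exact add_comm _ _
    rw [hsplit, ascPochhammer_succ_eval, ih]
    push_cast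
    ring

theorem Fin.pairwise_disjoint_snoc_iff {α : Type*} {k : ℕ} (B : Fin k → Finset α)
    (T : Finset α) :
    (Pairwise fun i j => Disjoint ((Fin.snoc B T : Fin (k + 1) → Finset α) i)
        ((Fin.snoc B T : Fin (k + 1) → Finset α) j)) ↔
      (Pairwise fun i j => Disjoint (B i) (B j)) ∧ ∀ j, Disjoint (B j) T := by
  simp [Pairwise, Fin.forall_fin_succ', disjoint_comm, forall_and, Fin.castSucc_ne_last,
    (Fin.castSucc_ne_last _).symm]

section OrderedPartition

variable {α : Type*} [DecidableEq α]

theorem Fin.univ_biUnion_snoc {k : ℕ} (B : Fin k → Finset α) (T : Finset α) :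
    univ.biUnion (Fin.snoc B T : Fin (k + 1) → Finset α) = univ.biUnion B ∪ T := by
  ext
  simp [Fin.exists_fin_succ']

def IsOrderedPartition (U : Finset α) {k : ℕ} (B : Fin k → Finset α) : Prop :=
  (∀ j, (B j).Nonempty) ∧ (Pairwise fun i j => Disjoint (B i) (B j)) ∧ univ.biUnion B = U

theorem isOrderedPartition_zero_iff {U : Finset α} {B : Fin 0 → Finset α} :
    IsOrderedPartition U B ↔ U = ∅ := by
  simp [IsOrderedPartition, Pairwise, eq_comm]

namespace IsOrderedPartition

variable {U : Finset α} {k : ℕ} {B : Fin k → Finset α}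

theorem sum_card (h : IsOrderedPartition U B) : ∑ j, (B j).card = U.card := by
  rw [← h.2.2, card_biUnion fun i _ j _ hij => h.2.1 hij]

theorem le_card (h : IsOrderedPartition U B) : k ≤ U.card := by
  rw [← h.sum_card]
  simpa using card_nsmul_le_sum univ (fun j => (B j).card) 1 fun j _ => (h.1 j).card_pos

end IsOrderedPartition

theorem isOrderedPartition_snoc_iff {U : Finset α} {k : ℕ} (B : Fin k → Finset α)
    (T : Finset α) :
    IsOrderedPartition U (Fin.snoc B T : Fin (k + 1) → Finset α) ↔
      T.Nonempty ∧ T ⊆ U ∧ IsOrderedPartition (U \ T) B := by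
  have hunion : (∀ j, Disjoint (B j) T) ∧ univ.biUnion B ∪ T = U ↔
      T ⊆ U ∧ univ.biUnion B = U \ T := by
    rw [show (∀ j, Disjoint (B j) T) ↔ Disjoint (univ.biUnion B) T by
      simp [disjoint_biUnion_left]]
    constructor
    · rintro ⟨hd, rfl⟩
      exact ⟨subset_union_right, (union_sdiff_cancel_right hd).symm⟩
    · rintro ⟨hT, hB⟩
      exact ⟨hB ▸ sdiff_disjoint, hB ▸ sdiff_union_of_subset hT⟩
  simp only [IsOrderedPartition, Fin.forall_fin_succ', Fin.snoc_castSucc, Fin.snoc_last,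
    Fin.pairwise_disjoint_snoc_iff, Fin.univ_biUnion_snoc]
  tauto

end OrderedPartition

section Weight

variable {α : Type*}

noncomputable def orderedEwensWeight {k : ℕ} (B : Fin k → Finset α) : ℝ :=
  ∏ j : Fin k, ((B j).card ! : ℝ) / ∑ i ∈ Iic j, ((B i).card : ℝ)

variable [DecidableEq α]

theorem orderedEwensWeight_snoc {U T : Finset α} {k : ℕ} {B : Fin k → Finset α}
    (h : IsOrderedPartition U (Fin.snoc B T : Fin (k + 1) → Finset α)) :
    orderedEwensWeight (Fin.snoc B T : Fin (k + 1) → Finset α) =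
      orderedEwensWeight B * (T.card ! / U.card) := by
  have hlast : ∑ i ∈ Iic (Fin.last k), (((Fin.snoc B T : Fin (k + 1) → Finset α) i).card : ℝ) =
      U.card := by
    rw [show Iic (Fin.last k) = univ by ext; simp [Fin.le_last], ← h.sum_card]
    push_cast
    rfl
  rw [orderedEwensWeight, Fin.prod_univ_castSucc, hlast]
  simp only [Fin.sum_Iic_castSucc, Fin.snoc_castSucc, Fin.snoc_last]
  rfl

variable [Fintype α]

noncomputable def orderedEwensMass (U : Finset α) (k : ℕ) : ℝ :=
  ∑ B : Fin k → Finset α, if IsOrderedPartition U B then orderedEwensWeight B else 0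

/-- The `Fintype` instance is left arbitrary: the one synthesized for a concrete predicate may be
built from other decidability instances. -/
theorem orderedEwensMass_eq_sum_subtype (U : Finset α) (k : ℕ)
    {F : Fintype {B : Fin k → Finset α // IsOrderedPartition U B}} :
    orderedEwensMass U k =
      ∑ B : {B : Fin k → Finset α // IsOrderedPartition U B}, orderedEwensWeight B.1 := by
  rw [orderedEwensMass, ← sum_filter]
  exact sum_subtype _ (fun B => by simp) _

theorem orderedEwensMass_zero (U : Finset α) :
    orderedEwensMass U 0 = if U = ∅ then 1 else 0 := by
  simp [orderedEwensMass, isOrderedPartition_zero_iff, orderedEwensWeight]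

theorem orderedEwensMass_eq_zero_of_card_lt {U : Finset α} {k : ℕ} (h : U.card < k) :
    orderedEwensMass U k = 0 :=
  sum_eq_zero fun _ _ => if_neg fun hB => (hB.le_card.trans_lt h).false

theorem orderedEwensMass_succ (U : Finset α) (k : ℕ) :
    orderedEwensMass U (k + 1) =
      ∑ T ∈ U.powerset with T.Nonempty, T.card ! / U.card * orderedEwensMass (U \ T) k := by
  rw [orderedEwensMass, ← Equiv.sum_comp (Fin.snocEquiv fun _ => Finset α)
    (fun B => if IsOrderedPartition U B then orderedEwensWeight B else 0), Fintype.sum_prod_type,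
    sum_filter, ← Fintype.sum_extend_by_zero U.powerset]
  refine sum_congr rfl fun T _ => ?_
  simp only [Fin.snocEquiv, Equiv.coe_fn_mk, isOrderedPartition_snoc_iff, mem_powerset]
  by_cases hT : T.Nonempty ∧ T ⊆ U
  · rw [if_pos hT.2, if_pos hT.1, orderedEwensMass, mul_sum]
    refine sum_congr rfl fun B _ => ?_
    by_cases hB : IsOrderedPartition (U \ T) B
    · rw [if_pos ⟨hT.1, hT.2, hB⟩, if_pos hB, mul_comm,
        orderedEwensWeight_snoc ((isOrderedPartition_snoc_iff B T).2 ⟨hT.1, hT.2, hB⟩)]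
    · rw [if_neg fun h => hB h.2.2, if_neg hB, mul_zero]
  · rw [sum_eq_zero fun B _ => if_neg fun h => hT ⟨h.1, h.2.1⟩]
    split_ifs <;> tauto

end Weight

section PartitionFunction

variable {α : Type*} [DecidableEq α]

theorem ascPochhammer_eval_card_eq_sum_powerset (θ : ℝ) {U : Finset α} (hU : U.Nonempty) :
    (ascPochhammer ℝ U.card).eval θ =
      θ * ∑ T ∈ U.powerset with T.Nonempty,
        T.card ! / U.card * (ascPochhammer ℝ (U \ T).card).eval θ := by
  obtain ⟨m, hm⟩ : ∃ m, U.card = m + 1 := Nat.exists_eq_succ_of_ne_zero hU.card_pos.ne'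
  set f : ℕ → ℝ := fun r =>
    if r = 0 then 0 else r ! / (m + 1) * (ascPochhammer ℝ (m + 1 - r)).eval θ
  have hcard : ∀ T ∈ U.powerset,
      (if T.Nonempty then T.card ! / U.card * (ascPochhammer ℝ (U \ T).card).eval θ else 0) =
        f T.card := by
    intro T hT
    rcases T.eq_empty_or_nonempty with rfl | hT'
    · simp [f]
    · simp only [f, if_pos hT', if_neg hT'.card_pos.ne']
      rw [card_sdiff_of_subset (mem_powerset.1 hT), hm]
      push_cast
      rfl
  rw [sum_filter, sum_congr rfl hcard, sum_powerset_apply_card f, hm, sum_range_succ',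
    ascPochhammer_succ_eval_eq_mul_sum_descFactorial]
  simp only [f, Nat.add_sub_add_right, Nat.succ_ne_zero, if_true, if_false, smul_zero, add_zero,
    nsmul_eq_mul]
  congr 1
  refine sum_congr rfl fun r _ => ?_
  have hchoose : ((m + 1).choose (r + 1) * (r + 1)! : ℝ) = (m + 1) * m.descFactorial r := by
    rw [← Nat.cast_mul, mul_comm, ← Nat.descFactorial_eq_factorial_mul_choose,
      Nat.succ_descFactorial_succ]
    push_cast
    ring
  rw [← mul_assoc, mul_div_assoc', hchoose]
  field_simp

variable [Fintype α]

/-- Ordered partitions of `U` have at most `U.card ≤ Fintype.card α` blocks, so this is the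
whole generating polynomial of the masses. -/
noncomputable def orderedEwensSum (θ : ℝ) (U : Finset α) : ℝ :=
  ∑ k ∈ range (Fintype.card α + 1), θ ^ k * orderedEwensMass U k

theorem orderedEwensSum_empty (θ : ℝ) : orderedEwensSum θ (∅ : Finset α) = 1 := by
  rw [orderedEwensSum, sum_range_succ', sum_eq_zero fun k _ => by
    rw [orderedEwensMass_eq_zero_of_card_lt (by simp), mul_zero], orderedEwensMass_zero]
  simp

theorem orderedEwensSum_of_nonempty (θ : ℝ) {U : Finset α} (hU : U.Nonempty) :
    orderedEwensSum θ U =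
      θ * ∑ T ∈ U.powerset with T.Nonempty, T.card ! / U.card * orderedEwensSum θ (U \ T) := by
  have htrunc : ∀ T ∈ {T ∈ U.powerset | T.Nonempty}, orderedEwensSum θ (U \ T) =
      ∑ k ∈ range (Fintype.card α), θ ^ k * orderedEwensMass (U \ T) k := by
    intro T hT
    rw [mem_filter, mem_powerset] at hT
    have hlt : (U \ T).card < Fintype.card α :=
      (card_lt_card (sdiff_ssubset hT.1 hT.2)).trans_le (card_le_univ U)
    rw [orderedEwensSum, sum_range_succ, orderedEwensMass_eq_zero_of_card_lt hlt, mul_zero,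
      add_zero]
  rw [orderedEwensSum, sum_range_succ', orderedEwensMass_zero, if_neg hU.ne_empty, mul_zero,
    add_zero]
  simp only [orderedEwensMass_succ, mul_sum]
  rw [sum_comm]
  refine sum_congr rfl fun T hT => ?_
  rw [htrunc T hT, mul_sum, mul_sum]
  exact sum_congr rfl fun k _ => by ring

theorem orderedEwensSum_eq_ascPochhammer (θ : ℝ) (U : Finset α) :
    orderedEwensSum θ U = (ascPochhammer ℝ U.card).eval θ := by
  induction U using Finset.strongInduction with
  | H U ih =>
    rcases U.eq_empty_or_nonempty with rfl | hU
    · simp [orderedEwensSum_empty]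
    rw [orderedEwensSum_of_nonempty θ hU, ascPochhammer_eval_card_eq_sum_powerset θ hU]
    refine congrArg _ (sum_congr rfl fun T hT => ?_)
    rw [mem_filter, mem_powerset] at hT
    rw [ih _ (sdiff_ssubset hT.1 hT.2)]

end PartitionFunction

/-- the ordered Ewens sampling formula defines a probability distribution:
summing `θ^{k−1}/[θ+1]_{n−1} · ∏_{j=1}^k n_j!/(n_1+⋯+n_j)` over all ordered set
partitions `(B_1, …, B_k)` of `[n]` gives `1`. -/
theorem ordered_ewens_sampling_formula_sums_to_one (n : ℕ) (hn : 1 ≤ n) (θ : ℝ)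
    (hθ : 0 < θ) :
    ∑ k ∈ Finset.range (n + 1),
      ∑ B : {B : Fin k → Finset (Fin n) //
          (∀ j, (B j).Nonempty) ∧ (Pairwise fun i j => Disjoint (B i) (B j)) ∧
            Finset.univ.biUnion B = Finset.univ},
        θ ^ (k - 1) / (∏ i ∈ Finset.range (n - 1), (θ + 1 + i)) *
          ∏ j : Fin k,
            (Nat.factorial ((B.1 j).card) : ℝ) /
              (∑ i ∈ Finset.Iic j, ((B.1 i).card : ℝ)) = 1 := by
  obtain ⟨m, rfl⟩ : ∃ m, n = m + 1 := Nat.exists_eq_add_of_le' hn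
  set ρ := (ascPochhammer ℝ m).eval (θ + 1)
  have hρ : 0 < ρ := ascPochhammer_pos _ _ (by positivity)
  have hU : (univ : Finset (Fin (m + 1))).Nonempty := univ_nonempty
  rw [Nat.add_sub_cancel, ← ascPochhammer_eval_eq_prod_range]
  calc _ = ∑ k ∈ range (m + 2), θ ^ (k - 1) / ρ * orderedEwensMass (α := Fin (m + 1)) univ k :=
      sum_congr rfl fun k _ => by
        rw [← mul_sum]
        exact congrArg _ (orderedEwensMass_eq_sum_subtype univ k).symm
    _ = (θ * ρ)⁻¹ * orderedEwensSum (α := Fin (m + 1)) θ univ := by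
      rw [orderedEwensSum, Fintype.card_fin, mul_sum, sum_range_succ', sum_range_succ' _ (m + 1),
        orderedEwensMass_zero, if_neg hU.ne_empty]
      congr 1
      · exact sum_congr rfl fun k _ => by rw [Nat.add_sub_cancel, pow_succ]; field_simp
      · simp
    _ = 1 := by
      rw [orderedEwensSum_eq_ascPochhammer, card_univ, Fintype.card_fin, ascPochhammer_succ_left]
      simp only [eval_mul, eval_X, eval_comp, eval_add, eval_one]
      exact inv_mul_cancel₀ (mul_pos hθ hρ).ne'
end

section
/- The value I_n of the first-split size satisfies ∑_{i=1}^{n−1} (n−1)! ∫_0^∞ dθ / ((θ+i)[θ+1]_{n−1}) = 1, i.e., the formula P(I_n = i) = (n−1)! ∫_0^∞ dθ/((θ+i)[θ+1]_{n−1}) defines a probability distribution on {1, ..., n−1}. -/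
/-!
With `P θ = ∏ j, (θ + a j)`, the logarithmic derivative gives
`∑ i, 1 / ((θ + a i) * P θ) = P' θ / P θ ^ 2 = (-(P θ)⁻¹)'`, so the sum of the integrals over
`(0, ∞)` telescopes to `(P 0)⁻¹`. For `a j = j + 1`, `j < n - 1`, that is `1 / (n - 1)!`.
-/

open MeasureTheory Set Filter Topology Finset

section
variable {ι : Type*} (s : Finset ι) (a : ι → ℝ)

theorem hasDerivAt_inv_prod_add {θ : ℝ} (hθ : ∀ j ∈ s, θ + a j ≠ 0) :
    HasDerivAt (fun x ↦ (∏ j ∈ s, (x + a j))⁻¹)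
      (-∑ i ∈ s, 1 / ((θ + a i) * ∏ j ∈ s, (θ + a j))) θ := by
  classical
  have hP : HasDerivAt (fun x ↦ ∏ j ∈ s, (x + a j)) (∑ i ∈ s, ∏ j ∈ s.erase i, (θ + a j)) θ := by
    simpa using HasDerivAt.fun_finsetProd (u := s) (x := θ)
      (fun i _ ↦ (hasDerivAt_id θ).add_const (a i))
  refine (hP.inv (prod_ne_zero_iff.mpr hθ)).congr_deriv ?_
  rw [neg_div, sum_div]
  congr 1
  refine sum_congr rfl fun i hi ↦ ?_
  rw [← mul_prod_erase s _ hi]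
  field_simp [hθ i hi]

theorem tendsto_inv_prod_add_atTop (hs : s.Nonempty) :
    Tendsto (fun x ↦ (∏ j ∈ s, (x + a j))⁻¹) atTop (𝓝 0) := by
  have h := tendsto_finsetProd s fun j _ ↦
    tendsto_inv_atTop_zero.comp (tendsto_atTop_add_const_right atTop (a j) tendsto_id)
  simpa [prod_inv_distrib, zero_pow hs.card_pos.ne'] using h

theorem sum_integral_Ioi_one_div_mul_prod_add (ha : ∀ j ∈ s, 0 < a j) (hs : s.Nonempty) :
    ∑ i ∈ s, ∫ θ in Ioi 0, 1 / ((θ + a i) * ∏ j ∈ s, (θ + a j)) = (∏ j ∈ s, a j)⁻¹ := by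
  set f : ι → ℝ → ℝ := fun i θ ↦ 1 / ((θ + a i) * ∏ j ∈ s, (θ + a j))
  have hpos : ∀ θ ∈ Ici (0 : ℝ), ∀ j ∈ s, 0 < θ + a j := fun θ hθ j hj ↦
    add_pos_of_nonneg_of_pos hθ (ha j hj)
  have hf_nonneg : ∀ θ ∈ Ici (0 : ℝ), ∀ i ∈ s, 0 ≤ f i θ := fun θ hθ i hi ↦
    one_div_nonneg.mpr (mul_pos (hpos θ hθ i hi) (prod_pos (hpos θ hθ))).le
  have hderiv : ∀ θ ∈ Ici (0 : ℝ),
      HasDerivAt (fun x ↦ -(∏ j ∈ s, (x + a j))⁻¹) (∑ i ∈ s, f i θ) θ := fun θ hθ ↦ by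
    simpa only [neg_neg] using
      (hasDerivAt_inv_prod_add s a fun j hj ↦ (hpos θ hθ j hj).ne').fun_neg
  have hlim : Tendsto (fun x ↦ -(∏ j ∈ s, (x + a j))⁻¹) atTop (𝓝 0) := by
    simpa using (tendsto_inv_prod_add_atTop s a hs).neg
  have hsum_nonneg : ∀ θ ∈ Ioi (0 : ℝ), 0 ≤ ∑ i ∈ s, f i θ := fun θ hθ ↦
    sum_nonneg (hf_nonneg θ (Ioi_subset_Ici_self hθ))
  have hsum_int := integrableOn_Ioi_deriv_of_nonneg' hderiv hsum_nonneg hlim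
  have hf_int : ∀ i ∈ s, IntegrableOn (f i) (Ioi 0) := fun i hi ↦ by
    refine hsum_int.mono' (by fun_prop) ?_
    filter_upwards [ae_restrict_mem measurableSet_Ioi] with θ hθ
    have hθ' := Ioi_subset_Ici_self hθ
    rw [Real.norm_of_nonneg (hf_nonneg θ hθ' i hi)]
    exact single_le_sum (hf_nonneg θ hθ') hi
  rw [← integral_finsetSum s hf_int,
    integral_Ioi_of_hasDerivAt_of_nonneg' hderiv hsum_nonneg hlim]
  simp

end

/-- `∑_{i=1}^{n−1} (n−1)! ∫_0^∞ dθ/((θ+i)[θ+1]_{n−1}) = 1`, i.e. the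
first-split law of the Ewens fragmentation is a probability distribution on `{1,…,n−1}`. -/
theorem first_split_law_sums_to_one (n : ℕ) (hn : 2 ≤ n) :
    ∑ i ∈ Finset.Icc 1 (n - 1),
        (Nat.factorial (n - 1) : ℝ) *
          ∫ θ in Set.Ioi (0:ℝ),
            1 / ((θ + i) * ∏ j ∈ Finset.range (n - 1), (θ + 1 + j)) = 1 := by
  have key := sum_integral_Ioi_one_div_mul_prod_add (range (n - 1)) (fun j : ℕ ↦ 1 + (j : ℝ))
    (fun j _ ↦ by positivity) (nonempty_range_iff.mpr (by omega))
  have hfact : ∏ j ∈ range (n - 1), (1 + (j : ℝ)) = (n - 1).factorial := by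
    simp_rw [add_comm (1 : ℝ)]
    exact_mod_cast prod_range_add_one_eq_factorial (n - 1)
  rw [← mul_sum, ← Finset.Ico_add_one_right_eq_Icc, sum_Ico_eq_sum_range]
  simp_rw [Nat.add_sub_cancel, Nat.cast_add, Nat.cast_one, add_assoc]
  rw [key, hfact, mul_inv_cancel₀ (by positivity)]
end
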